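/- If (RG)^- is anticommutative, then for all x, y ∈ G with x^* ≠ x and y^* ≠ y: if xy ≠ yx then 1 + σ(xy) = σ(x) + σ(y) in R; if xy = yx then 2(1 + σ(xy)) = 0 = 2(σ(x) + σ(y)) in R. -/

import Mathlib

open Finsupp

/-- The generalized oriented map σ* on the group ring RG. -/
noncomputable def sigmaStar {R : Type} [CommRing R] {G : Type} [Group G]
    (inv : G → G) (σ : G →* Rˣ) (α : MonoidAlgebra R G) : MonoidAlgebra R G :=
  MonoidAlgebra.ofCoeff (α.coeff.sum fun x a => Finsupp.single (inv x) ((σ x : R) * a))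

/-- The set of skew-symmetric elements of RG under σ*. -/
def skewSet {R : Type} [CommRing R] {G : Type} [Group G]
    (inv : G → G) (σ : G →* Rˣ) : Set (MonoidAlgebra R G) :=
  {α | sigmaStar inv σ α = -α}

/-!
The elements `γ g = skewGen inv σ g = g - σ(g) g^*` are skew, so `γ x * γ y + γ y * γ x = 0`.
Applying `sigmaAug σ`, the algebra map `RG → R` extending `σ`, gives
`2 (σ x - 1) (σ y - 1) = 0`; the rest comes from the coefficient of `x y` in that
anticommutator, after sorting out which of its eight monomials equal `x y`. The only case this
leaves open is `σ (x y) = -1`, where the coefficient of `y (x y)` in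
`γ (x y) * γ y + γ y * γ (x y)` forces `σ y ^ 2 = 1`. Since `ringChar R ≠ 2`, either `2 ≠ 0`
in `R` or `R` is the zero ring.
-/

lemma subsingleton_of_two_eq_zero {R : Type} [CommRing R] (hchar : ringChar R ≠ 2)
    (htwo : (2 : R) = 0) : Subsingleton R := by
  have hdvd : ringChar R ∣ 2 := (ringChar.spec R 2).mp (by exact_mod_cast htwo)
  rcases Nat.prime_two.eq_one_or_self_of_dvd _ hdvd with h | h
  · exact ringChar.ringChar_eq_one.mp h
  · exact absurd h hchar

/-- `A`, `B`, `C` record which of the monomials `y x^*`, `y^* x` and `x^* y^*` or `y^* x^*` of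
`γ x * γ y + γ y * γ x` equal `x y`; `hE` is its coefficient at `x y`. -/
lemma sub_one_mul_sub_one_eq_zero_of_coeff {R : Type} [CommRing R] {a b : R} (ha : IsUnit a)
    (hb : IsUnit b) (htwo : (2 : R) ≠ 0) (hF : 2 * ((a - 1) * (b - 1)) = 0)
    (hsq : 1 + a * b = 0 → b * b = 1) {A B C : Prop} [Decidable A] [Decidable B] [Decidable C]
    (hE : 1 - (if A then a else 0) - (if B then b else 0) + (if C then a * b else 0) = 0) :
    (a - 1) * (b - 1) = 0 := by
  split_ifs at hE
  · linear_combination hE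
  · exact absurd ((ha.mul hb).mul_left_eq_zero.mp (by linear_combination hF - 2 * hE)) htwo
  · exact absurd (hb.mul_left_eq_zero.mp (by linear_combination 2 * hE - hF)) htwo
  · linear_combination (1 - b) * hE
  · exact absurd (ha.mul_left_eq_zero.mp (by linear_combination 2 * hE - hF)) htwo
  · linear_combination (1 - a) * hE
  · linear_combination (1 - b) * hE + a * hsq (by linear_combination hE)
  · exact absurd (by linear_combination 2 * hE) htwo

section
variable {R : Type} [CommRing R] {G : Type} [Group G] (inv : G → G) (σ : G →* Rˣ)

lemma sigmaStar_single (g : G) (a : R) :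
    sigmaStar inv σ (MonoidAlgebra.single g a) = MonoidAlgebra.single (inv g) ((σ g : R) * a) := by
  rw [sigmaStar, MonoidAlgebra.coeff_single, Finsupp.sum_single_index (by simp)]
  rfl

lemma sigmaStar_add (α β : MonoidAlgebra R G) :
    sigmaStar inv σ (α + β) = sigmaStar inv σ α + sigmaStar inv σ β := by
  rw [sigmaStar, MonoidAlgebra.coeff_add, Finsupp.sum_add_index' (fun _ => by simp)
    (fun _ _ _ => by rw [mul_add, Finsupp.single_add]), MonoidAlgebra.ofCoeff_add]
  rfl

lemma sigmaStar_zero : sigmaStar inv σ 0 = 0 :=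
  (AddMonoidHom.mk' _ (sigmaStar_add inv σ)).map_zero

lemma sigmaStar_sub (α β : MonoidAlgebra R G) :
    sigmaStar inv σ (α - β) = sigmaStar inv σ α - sigmaStar inv σ β :=
  (AddMonoidHom.mk' _ (sigmaStar_add inv σ)).map_sub α β

noncomputable def skewGen (g : G) : MonoidAlgebra R G :=
  MonoidAlgebra.single g 1 - sigmaStar inv σ (MonoidAlgebra.single g 1)

lemma skewGen_eq (g : G) :
    skewGen inv σ g = MonoidAlgebra.single g 1 - MonoidAlgebra.single (inv g) (σ g : R) := by
  rw [skewGen, sigmaStar_single, mul_one]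

lemma coeff_skewGen_mul_skewGen [DecidableEq G] (g h k : G) :
    (skewGen inv σ g * skewGen inv σ h).coeff k =
      (if g * h = k then 1 else 0) - (if g * inv h = k then (σ h : R) else 0)
        - (if inv g * h = k then (σ g : R) else 0)
        + (if inv g * inv h = k then (σ g : R) * σ h else 0) := by
  simp only [skewGen_eq, sub_mul, mul_sub, MonoidAlgebra.single_mul_single, one_mul, mul_one,
    MonoidAlgebra.coeff_sub, MonoidAlgebra.coeff_single, Finsupp.coe_sub, Pi.sub_apply,
    Finsupp.single_apply]
  ring

noncomputable abbrev sigmaAug : MonoidAlgebra R G →ₐ[R] R :=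
  MonoidAlgebra.lift R R G ((Units.coeHom R).comp σ)

variable {inv σ}

lemma sigma_inv_eq_inv (hcompat : ∀ g : G, g * inv g ∈ σ.ker) (g : G) :
    σ (inv g) = (σ g)⁻¹ :=
  eq_inv_of_mul_eq_one_right (by rw [← map_mul]; exact hcompat g)

lemma sigmaStar_sigmaStar (hinv : ∀ g : G, inv (inv g) = g)
    (hcompat : ∀ g : G, g * inv g ∈ σ.ker) (α : MonoidAlgebra R G) :
    sigmaStar inv σ (sigmaStar inv σ α) = α := by
  induction α using MonoidAlgebra.induction_linear with
  | zero => rw [sigmaStar_zero, sigmaStar_zero]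
  | add α β hα hβ => rw [sigmaStar_add, sigmaStar_add, hα, hβ]
  | single g a =>
    rw [sigmaStar_single, sigmaStar_single, hinv, sigma_inv_eq_inv hcompat, ← mul_assoc,
      ← Units.val_mul, inv_mul_cancel, Units.val_one, one_mul]

lemma sub_sigmaStar_mem_skewSet (hinv : ∀ g : G, inv (inv g) = g)
    (hcompat : ∀ g : G, g * inv g ∈ σ.ker) (α : MonoidAlgebra R G) :
    α - sigmaStar inv σ α ∈ skewSet inv σ := by
  rw [skewSet, Set.mem_ofPred_eq, sigmaStar_sub, sigmaStar_sigmaStar hinv hcompat, neg_sub]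

lemma sigmaAug_skewGen (hcompat : ∀ g : G, g * inv g ∈ σ.ker) (g : G) :
    sigmaAug σ (skewGen inv σ g) = σ g - 1 := by
  simp [skewGen_eq, MonoidAlgebra.lift_single, sigma_inv_eq_inv hcompat]

variable (hinv : ∀ g : G, inv (inv g) = g) (hcompat : ∀ g : G, g * inv g ∈ σ.ker)
  (hanti : ∀ α ∈ skewSet inv σ, ∀ β ∈ skewSet inv σ, α * β + β * α = 0)
include hinv hcompat hanti

lemma skewGen_anticomm (g h : G) :
    skewGen inv σ g * skewGen inv σ h + skewGen inv σ h * skewGen inv σ g = 0 :=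
  hanti _ (sub_sigmaStar_mem_skewSet hinv hcompat _) _ (sub_sigmaStar_mem_skewSet hinv hcompat _)

lemma two_mul_sigma_sub_one_mul_sigma_sub_one (x y : G) :
    2 * (((σ x : R) - 1) * ((σ y : R) - 1)) = 0 := by
  have := congrArg (sigmaAug σ) (skewGen_anticomm hinv hcompat hanti x y)
  rw [map_add, map_mul, map_mul, map_zero, sigmaAug_skewGen hcompat,
    sigmaAug_skewGen hcompat] at this
  linear_combination this

lemma coeff_anticomm [DecidableEq G] (g h k : G) :
    (skewGen inv σ g * skewGen inv σ h).coeff k + (skewGen inv σ h * skewGen inv σ g).coeff k =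
      0 := by
  rw [← Finsupp.add_apply, ← MonoidAlgebra.coeff_add, skewGen_anticomm hinv hcompat hanti]
  rfl

lemma two_mul_one_add_sigma_mul_eq_zero (hmul : ∀ x y : G, inv (x * y) = inv y * inv x)
    {x y : G} (hx : inv x ≠ x) (hy : inv y ≠ y) (hxy : x * y = y * x) :
    2 * (1 + (σ x : R) * σ y) = 0 := by
  classical
  have hcoeff := coeff_anticomm hinv hcompat hanti x y (x * y)
  rw [coeff_skewGen_mul_skewGen, coeff_skewGen_mul_skewGen] at hcoeff
  have n1 : x * inv y ≠ x * y := by simpa using hy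
  have n2 : inv x * y ≠ x * y := by simpa using hx
  have n3 : y * inv x ≠ x * y := by simpa [hxy] using hx
  have n4 : inv y * x ≠ x * y := by simpa [hxy] using hy
  have hinv_comm : inv x * inv y = inv y * inv x := by rw [← hmul, ← hmul, hxy]
  simp only [if_pos hxy.symm, ↓reduceIte, if_neg n1, if_neg n2, if_neg n3, if_neg n4, hinv_comm]
    at hcoeff
  split_ifs at hcoeff
  · linear_combination hcoeff
  · linear_combination (1 + (σ x : R) * σ y) * hcoeff

lemma sigma_inv_eq_of_sigma_eq_neg_one {z y : G} (hzy : z * y ≠ y * z) (hy : inv y ≠ y)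
    (hz : σ z = -1) (htwo : (2 : R) ≠ 0) : σ (inv y) = σ y := by
  classical
  by_contra hne
  have hσinv := sigma_inv_eq_inv hcompat
  have hcoeff := coeff_anticomm hinv hcompat hanti z y (y * z)
  rw [coeff_skewGen_mul_skewGen, coeff_skewGen_mul_skewGen] at hcoeff
  have n1 : z * inv y ≠ y * z := fun h =>
    hne (by simpa [hσinv, hz] using congrArg σ h)
  have n2 : inv z * inv y ≠ y * z := fun h =>
    hne (by simpa [hσinv, hz] using congrArg σ h)
  have n3 : inv y * inv z ≠ y * z := fun h =>
    hne (by simpa [hσinv, hz] using congrArg σ h)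
  have n4 : inv y * z ≠ y * z := by simpa using hy
  have hPQ : ¬(inv z * y = y * z ∧ y * inv z = y * z) := fun ⟨hP, hQ⟩ =>
    hzy (by rwa [mul_left_cancel hQ] at hP)
  simp only [if_neg hzy, if_neg n1, if_neg n2, if_neg n3, if_neg n4, ↓reduceIte] at hcoeff
  have hzR : (σ z : R) = -1 := by simp [hz]
  split_ifs at hcoeff with hP hQ
  · exact hPQ ⟨hP, hQ⟩
  · exact htwo (by linear_combination hcoeff + hzR)
  · exact htwo (by linear_combination hcoeff + hzR)
  · exact htwo (by linear_combination 2 * hcoeff)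

lemma one_add_sigma_mul_eq_of_ne (hmul : ∀ x y : G, inv (x * y) = inv y * inv x)
    {x y : G} (hx : inv x ≠ x) (hy : inv y ≠ y) (hxy : x * y ≠ y * x) (htwo : (2 : R) ≠ 0) :
    1 + (σ x : R) * σ y = σ x + σ y := by
  classical
  have hsq : 1 + (σ x : R) * σ y = 0 → (σ y : R) * σ y = 1 := fun h => by
    have hz : σ (x * y) = -1 := by
      ext
      simp only [map_mul, Units.val_mul, Units.val_neg, Units.val_one]
      linear_combination h
    have hzy : x * y * y ≠ y * (x * y) := by rwa [← mul_assoc, Ne, mul_left_inj]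
    have := sigma_inv_eq_of_sigma_eq_neg_one hinv hcompat hanti hzy hy hz htwo
    rw [sigma_inv_eq_inv hcompat, inv_eq_iff_mul_eq_one] at this
    simpa using congrArg Units.val this
  have hcoeff := coeff_anticomm hinv hcompat hanti x y (x * y)
  rw [coeff_skewGen_mul_skewGen, coeff_skewGen_mul_skewGen] at hcoeff
  have n1 : x * inv y ≠ x * y := by simpa using hy
  have n2 : inv x * y ≠ x * y := by simpa using hx
  have hCD : inv y * inv x = x * y → inv x * inv y ≠ x * y := fun hD hC => hxy (by
    have := congrArg inv hC
    rwa [hmul, hinv, hinv, hmul, hD, eq_comm] at this)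
  have hE : 1 - (if y * inv x = x * y then (σ x : R) else 0)
      - (if inv y * x = x * y then (σ y : R) else 0)
      + (if inv x * inv y = x * y ∨ inv y * inv x = x * y then (σ x : R) * σ y else 0) = 0 := by
    by_cases hD : inv y * inv x = x * y
    · simp only [if_neg n1, if_neg n2, if_neg hxy.symm, hD, hCD hD, or_true,
        ↓reduceIte] at hcoeff ⊢
      linear_combination hcoeff
    · simp only [if_neg n1, if_neg n2, if_neg hxy.symm, hD, or_false, ↓reduceIte]
        at hcoeff ⊢
      linear_combination hcoeff
  linear_combination sub_one_mul_sub_one_eq_zero_of_coeff (σ x).isUnit (σ y).isUnit htwo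
    (two_mul_sigma_sub_one_mul_sigma_sub_one hinv hcompat hanti x y) hsq hE
end

theorem stmt11_general {R : Type} [CommRing R] (hchar : ringChar R ≠ 2) {G : Type} [Group G]
    (inv : G → G) (hmul : ∀ x y : G, inv (x * y) = inv y * inv x)
    (hinv : ∀ x : G, inv (inv x) = x) (σ : G →* Rˣ)
    (hcompat : ∀ x : G, x * inv x ∈ σ.ker)
    (hanti : ∀ α ∈ skewSet inv σ, ∀ β ∈ skewSet inv σ, α * β + β * α = 0)
    (x y : G) (hx : inv x ≠ x) (hy : inv y ≠ y) :
    (x * y ≠ y * x → 1 + (σ (x * y) : R) = (σ x : R) + (σ y : R)) ∧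
    (x * y = y * x → 2 * (1 + (σ (x * y) : R)) = 0 ∧ 2 * ((σ x : R) + (σ y : R)) = 0) := by
  rcases eq_or_ne (2 : R) 0 with htwo | htwo
  · have := subsingleton_of_two_eq_zero hchar htwo
    exact ⟨fun _ => Subsingleton.elim _ _, fun _ => ⟨Subsingleton.elim _ _, Subsingleton.elim _ _⟩⟩
  rw [map_mul, Units.val_mul]
  refine ⟨fun hxy => one_add_sigma_mul_eq_of_ne hinv hcompat hanti hmul hx hy hxy htwo,
    fun hxy => ?_⟩
  have h := two_mul_one_add_sigma_mul_eq_zero hinv hcompat hanti hmul hx hy hxy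
  have hF := two_mul_sigma_sub_one_mul_sigma_sub_one hinv hcompat hanti x y
  exact ⟨h, by linear_combination h - hF⟩

theorem stmt11 {R : Type} [CommRing R] (hchar : ringChar R ≠ 2) {G : Type} [Group G]
    (inv : G → G) (hmul : ∀ x y : G, inv (x * y) = inv y * inv x)
    (hinv : ∀ x : G, inv (inv x) = x) (σ : G →* Rˣ) (hnt : σ ≠ 1)
    (hcompat : ∀ x : G, x * inv x ∈ σ.ker)
    (hanti : ∀ α ∈ skewSet inv σ, ∀ β ∈ skewSet inv σ, α * β + β * α = 0)
    (x y : G) (hx : inv x ≠ x) (hy : inv y ≠ y) :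
    (x * y ≠ y * x → 1 + (σ (x * y) : R) = (σ x : R) + (σ y : R)) ∧
    (x * y = y * x → 2 * (1 + (σ (x * y) : R)) = 0 ∧ 2 * ((σ x : R) + (σ y : R)) = 0) :=
  stmt11_general hchar inv hmul hinv σ hcompat hanti x y hx hy
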